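/- A monad T with an iteration operator † satisfying unfolding, naturality, uniformity, and the Bekić identity also satisfies dinaturality: for g : X → T(Y + Z) and h : Z → T(Y + X), ([η ∘ inl, h]* ∘ g)† = [η, ([η ∘ inl, g]* ∘ h)†]* ∘ g. -/

import Mathlib

open CategoryTheory Limits

variable {C : Type*} [Category C] [HasBinaryCoproducts C]

/-- Kleisli extension of a monad. -/
def kl (T : Monad C) {X Y : C} (f : X ⟶ T.obj Y) : T.obj X ⟶ T.obj Y :=
  T.map f ≫ T.μ.app Y

/-!
Package the two loops `g : X → T(Y + Z)` and `h : Z → T(Y + X)` into a single loop on `Z + X`.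
By Bekić, with `g` as the inner loop (which never re-enters `X`, so iterates to `g` itself by
unfolding), iterating it computes `h` iterated with `g` substituted (on `Z`) and `g` followed by
that iteration (on `X`); swapping the roles of `g` and `h` gives a loop on `X + Z` which, by
uniformity along the braiding, has the same iteration up to swapping the summands. Comparing the
`X`-components of the two descriptions yields dinaturality.
-/

section Kleisli

omit [HasBinaryCoproducts C]

variable (T : Monad C)

lemma η_app_comp_kl {X Y : C} (f : X ⟶ T.obj Y) : T.η.app X ≫ kl T f = f := by
  simp [kl, ← T.η.naturality_assoc f]

lemma map_comp_kl {X Y Z : C} (f : X ⟶ Y) (g : Y ⟶ T.obj Z) :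
    T.map f ≫ kl T g = kl T (f ≫ g) := by
  simp [kl]

lemma kl_η_app (X : C) : kl T (T.η.app X) = 𝟙 (T.obj X) := by
  simp [kl]

end Kleisli

section Iteration

variable (T : Monad C) (iter : ∀ {X Y : C}, (X ⟶ T.obj (Y ⨿ X)) → (X ⟶ T.obj Y))

def Unfolding : Prop :=
  ∀ {X Y : C} (f : X ⟶ T.obj (Y ⨿ X)), f ≫ kl T (coprod.desc (T.η.app Y) (iter f)) = iter f

def Uniformity : Prop :=
  ∀ {X Y Z : C} (f : X ⟶ T.obj (Y ⨿ X)) (g : Z ⟶ T.obj (Y ⨿ Z)) (h : Z ⟶ X),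
    h ≫ f = g ≫ T.map (coprod.map (𝟙 Y) h) → h ≫ iter f = iter g

def Bekic : Prop :=
  ∀ {X Y Z : C} (g : X ⟶ T.obj ((Z ⨿ Y) ⨿ X)) (f : Y ⟶ T.obj ((Z ⨿ Y) ⨿ X)),
    iter (coprod.desc f g ≫ T.map (coprod.associator Z Y X).hom) =
      coprod.desc (coprod.inr ≫ T.η.app (Z ⨿ Y)) (iter g) ≫
        kl T (coprod.desc (T.η.app Z)
          (iter (f ≫ kl T (coprod.desc (T.η.app (Z ⨿ Y)) (iter g)))))

noncomputable def mutualLoop {X Y Z : C} (g : X ⟶ T.obj (Y ⨿ Z)) (h : Z ⟶ T.obj (Y ⨿ X)) :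
    Z ⨿ X ⟶ T.obj (Y ⨿ (Z ⨿ X)) :=
  coprod.desc (h ≫ T.map (coprod.map (𝟙 Y) coprod.inr))
    (g ≫ T.map (coprod.map (𝟙 Y) coprod.inl))

lemma braiding_hom_comp_mutualLoop {X Y Z : C} (g : X ⟶ T.obj (Y ⨿ Z))
    (h : Z ⟶ T.obj (Y ⨿ X)) :
    (coprod.braiding X Z).hom ≫ mutualLoop T g h =
      mutualLoop T h g ≫ T.map (coprod.map (𝟙 Y) (coprod.braiding X Z).hom) := by
  ext <;> simp only [mutualLoop, coprod.braiding_hom, coprod.inl_desc_assoc,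
    coprod.inr_desc_assoc, Category.assoc, ← Functor.map_comp, coprod.map_map, Category.comp_id,
    coprod.inl_desc, coprod.inr_desc]

lemma mutualLoop_eq_desc_comp_associator {X Y Z : C} (g : X ⟶ T.obj (Y ⨿ Z))
    (h : Z ⟶ T.obj (Y ⨿ X)) :
    mutualLoop T g h =
      coprod.desc (h ≫ T.map (coprod.desc (coprod.inl ≫ coprod.inl) coprod.inr))
        (g ≫ T.map coprod.inl) ≫ T.map (coprod.associator Y Z X).hom := by
  have onZ : coprod.desc (coprod.inl ≫ coprod.inl) coprod.inr ≫ (coprod.associator Y Z X).hom =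
      coprod.map (𝟙 Y) coprod.inr := by
    ext <;> simp only [coprod.associator_hom, coprod.inl_desc_assoc, coprod.inr_desc_assoc,
      coprod.inl_desc, coprod.inr_desc, coprod.inl_map, coprod.inr_map, Category.id_comp,
      Category.assoc]
  have onX : coprod.inl ≫ (coprod.associator Y Z X).hom = coprod.map (𝟙 Y) coprod.inl := by
    ext <;> simp only [coprod.associator_hom, coprod.inl_desc, coprod.inr_desc, coprod.inl_map,
      coprod.inr_map, Category.id_comp]
  apply coprod.hom_ext <;>
    simp only [mutualLoop, coprod.inl_desc, coprod.inr_desc, coprod.inl_desc_assoc,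
      coprod.inr_desc_assoc, Category.assoc, ← Functor.map_comp, onZ, onX]

-- The laws are applied to `@iter`: plain `iter` would elaborate to `fun {X Y} => iter`, whose
-- unreduced beta-redexes block rewriting with them.
lemma iter_comp_map_inl (unfolding : Unfolding T @iter) {A B : C} (k : A ⟶ T.obj B) : iter (k ≫ T.map (coprod.inl : B ⟶ B ⨿ A)) = k := by
  simpa only [Category.assoc, map_comp_kl, coprod.inl_desc, kl_η_app, Category.comp_id] using
    (unfolding (k ≫ T.map coprod.inl)).symm

lemma iter_mutualLoop (unfolding : Unfolding T @iter) (bekic : Bekic T @iter)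
    {X Y Z : C} (g : X ⟶ T.obj (Y ⨿ Z)) (h : Z ⟶ T.obj (Y ⨿ X)) :
    iter (mutualLoop T g h) =
      coprod.desc (coprod.inr ≫ T.η.app (Y ⨿ Z)) g ≫
        kl T (coprod.desc (T.η.app Y)
          (iter (h ≫ kl T (coprod.desc (coprod.inl ≫ T.η.app (Y ⨿ Z)) g)))) := by
  have substitute : coprod.desc (coprod.inl ≫ coprod.inl) coprod.inr ≫
      coprod.desc (T.η.app (Y ⨿ Z)) g = coprod.desc (coprod.inl ≫ T.η.app (Y ⨿ Z)) g := by
    ext <;> simp only [coprod.inl_desc_assoc, coprod.inr_desc_assoc, coprod.inl_desc,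
      coprod.inr_desc, Category.assoc]
  rw [mutualLoop_eq_desc_comp_associator, bekic, iter_comp_map_inl T iter unfolding,
    Category.assoc, map_comp_kl, substitute]

lemma braiding_hom_comp_iter_mutualLoop (uniformity : Uniformity T @iter)
    {X Y Z : C} (g : X ⟶ T.obj (Y ⨿ Z)) (h : Z ⟶ T.obj (Y ⨿ X)) :
    (coprod.braiding X Z).hom ≫ iter (mutualLoop T g h) = iter (mutualLoop T h g) :=
  uniformity _ _ _ (braiding_hom_comp_mutualLoop T g h)

lemma inl_comp_iter_mutualLoop (unfolding : Unfolding T @iter) (bekic : Bekic T @iter)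
    {X Y Z : C} (g : X ⟶ T.obj (Y ⨿ Z)) (h : Z ⟶ T.obj (Y ⨿ X)) :
    coprod.inl ≫ iter (mutualLoop T g h) =
      iter (h ≫ kl T (coprod.desc (coprod.inl ≫ T.η.app (Y ⨿ Z)) g)) := by
  rw [iter_mutualLoop T iter unfolding bekic, coprod.inl_desc_assoc, Category.assoc,
    η_app_comp_kl, coprod.inr_desc]

lemma inr_comp_iter_mutualLoop (unfolding : Unfolding T @iter) (bekic : Bekic T @iter)
    {X Y Z : C} (g : X ⟶ T.obj (Y ⨿ Z)) (h : Z ⟶ T.obj (Y ⨿ X)) :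
    coprod.inr ≫ iter (mutualLoop T g h) =
      g ≫ kl T (coprod.desc (T.η.app Y)
        (iter (h ≫ kl T (coprod.desc (coprod.inl ≫ T.η.app (Y ⨿ Z)) g)))) := by
  rw [iter_mutualLoop T iter unfolding bekic, coprod.inr_desc_assoc]

end Iteration

theorem dinaturality_of_bekic_general (T : Monad C)
    (iter : ∀ {X Y : C}, (X ⟶ T.obj (Y ⨿ X)) → (X ⟶ T.obj Y))
    (unfolding : ∀ {X Y : C} (f : X ⟶ T.obj (Y ⨿ X)),
      f ≫ kl T (coprod.desc (T.η.app Y) (iter f)) = iter f)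
    (uniformity : ∀ {X Y Z : C} (f : X ⟶ T.obj (Y ⨿ X)) (g : Z ⟶ T.obj (Y ⨿ Z)) (h : Z ⟶ X),
      h ≫ f = g ≫ T.map (coprod.map (𝟙 Y) h) → h ≫ iter f = iter g)
    (bekic : ∀ {X Y Z : C} (g : X ⟶ T.obj ((Z ⨿ Y) ⨿ X)) (f : Y ⟶ T.obj ((Z ⨿ Y) ⨿ X)),
      iter (coprod.desc f g ≫ T.map (coprod.associator Z Y X).hom) =
        coprod.desc (coprod.inr ≫ T.η.app (Z ⨿ Y)) (iter g) ≫
          kl T (coprod.desc (T.η.app Z)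
            (iter (f ≫ kl T (coprod.desc (T.η.app (Z ⨿ Y)) (iter g))))))
    {X Y Z : C} (g : X ⟶ T.obj (Y ⨿ Z)) (h : Z ⟶ T.obj (Y ⨿ X)) :
    iter (g ≫ kl T (coprod.desc (coprod.inl ≫ T.η.app (Y ⨿ X)) h)) =
      g ≫ kl T (coprod.desc (T.η.app Y)
        (iter (h ≫ kl T (coprod.desc (coprod.inl ≫ T.η.app (Y ⨿ Z)) g)))) := by
  calc iter (g ≫ kl T (coprod.desc (coprod.inl ≫ T.η.app (Y ⨿ X)) h))
      = coprod.inl ≫ iter (mutualLoop T h g) :=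
        (inl_comp_iter_mutualLoop T iter unfolding bekic h g).symm
    _ = coprod.inr ≫ iter (mutualLoop T g h) := by
        rw [← braiding_hom_comp_iter_mutualLoop T iter uniformity g h, coprod.braiding_hom,
          coprod.inl_desc_assoc]
    _ = _ := inr_comp_iter_mutualLoop T iter unfolding bekic g h

/-- A monad with an iteration operator satisfying unfolding, naturality, uniformity
and the Bekić identity also satisfies dinaturality. -/
theorem dinaturality_of_bekic (T : Monad C)
    (iter : ∀ {X Y : C}, (X ⟶ T.obj (Y ⨿ X)) → (X ⟶ T.obj Y))
    (unfolding : ∀ {X Y : C} (f : X ⟶ T.obj (Y ⨿ X)),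
      f ≫ kl T (coprod.desc (T.η.app Y) (iter f)) = iter f)
    (naturality : ∀ {X Y Z : C} (f : X ⟶ T.obj (Y ⨿ X)) (g : Y ⟶ T.obj Z),
      iter f ≫ kl T g =
        iter (f ≫ kl T (coprod.desc (g ≫ T.map coprod.inl) (coprod.inr ≫ T.η.app (Z ⨿ X)))))
    (uniformity : ∀ {X Y Z : C} (f : X ⟶ T.obj (Y ⨿ X)) (g : Z ⟶ T.obj (Y ⨿ Z)) (h : Z ⟶ X),
      h ≫ f = g ≫ T.map (coprod.map (𝟙 Y) h) → h ≫ iter f = iter g)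
    (bekic : ∀ {X Y Z : C} (g : X ⟶ T.obj ((Z ⨿ Y) ⨿ X)) (f : Y ⟶ T.obj ((Z ⨿ Y) ⨿ X)),
      iter (coprod.desc f g ≫ T.map (coprod.associator Z Y X).hom) =
        coprod.desc (coprod.inr ≫ T.η.app (Z ⨿ Y)) (iter g) ≫
          kl T (coprod.desc (T.η.app Z)
            (iter (f ≫ kl T (coprod.desc (T.η.app (Z ⨿ Y)) (iter g))))))
    {X Y Z : C} (g : X ⟶ T.obj (Y ⨿ Z)) (h : Z ⟶ T.obj (Y ⨿ X)) :
    iter (g ≫ kl T (coprod.desc (coprod.inl ≫ T.η.app (Y ⨿ X)) h)) =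
      g ≫ kl T (coprod.desc (T.η.app Y)
        (iter (h ≫ kl T (coprod.desc (coprod.inl ≫ T.η.app (Y ⨿ Z)) g)))) :=
  dinaturality_of_bekic_general T iter unfolding uniformity bekic g h
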